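/- arXiv:1810.02769 — 3 statements merged into one kernel-verified Lean document; each statement's English description precedes it below -/
import Mathlib

section
/- The infinitary rule R5 preserves validity: for every necessity form η, every group G ⊆ A, and all formulas χ, φ of L_CoRGAL, if for every G-announcement ψ_G the formula η(χ ∧ [ψ_G ∧ χ]φ) is valid, then η([G,χ]φ) is valid. -/
/- Formalization of Coalition and Relativised Group Announcement Logic (CoRGAL). -/

namespace CoRGAL

/-- Purely epistemic formulas (the fragment L_EL). -/
inductive EForm (Agt : Type) : Type
  | atom : ℕ → EForm Agt
  | neg  : EForm Agt → EForm Agt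
  | and  : EForm Agt → EForm Agt → EForm Agt
  | know : Agt → EForm Agt → EForm Agt

/-- Formulas of L_CoRGAL: atoms, ¬, ∧, K_a, [φ]ψ, [G,χ]φ, [⟨G⟩]φ. -/
inductive Form (Agt : Type) : Type
  | atom  : ℕ → Form Agt
  | neg   : Form Agt → Form Agt
  | and   : Form Agt → Form Agt → Form Agt
  | know  : Agt → Form Agt → Form Agt
  | ann   : Form Agt → Form Agt → Form Agt          -- [φ]ψ
  | group : Finset Agt → Form Agt → Form Agt → Form Agt  -- [G,χ]φ
  | coal  : Finset Agt → Form Agt → Form Agt        -- [⟨G⟩]φ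

variable {Agt : Type}

def Form.imp (φ ψ : Form Agt) : Form Agt := .neg (.and φ (.neg ψ))
def Form.iff' (φ ψ : Form Agt) : Form Agt := .and (φ.imp ψ) (ψ.imp φ)
def Form.bot : Form Agt := .and (.atom 0) (.neg (.atom 0))
def Form.top : Form Agt := .neg Form.bot

def EForm.toForm : EForm Agt → Form Agt
  | .atom p => .atom p
  | .neg φ => .neg φ.toForm
  | .and φ ψ => .and φ.toForm ψ.toForm
  | .know a φ => .know a φ.toForm

/-- The G-announcement ⋀_{i ∈ G} K_i (f i), with all f i epistemic. -/
noncomputable def GAnn (G : Finset Agt) (f : Agt → EForm Agt) : Form Agt :=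
  (G.toList.map fun i => Form.know i (f i).toForm).foldr Form.and Form.top

/-- Epistemic models: states, an equivalence relation for each agent, a valuation. -/
structure Model (Agt : Type) where
  W : Type
  rel : Agt → W → W → Prop
  rel_equiv : ∀ a, Equivalence (rel a)
  val : ℕ → W → Prop

/-- Updated model: restriction to the states satisfying S. -/
def Model.restrict (M : Model Agt) (S : M.W → Prop) : Model Agt where
  W := {v : M.W // S v}
  rel a u v := M.rel a u.1 v.1
  rel_equiv a := ⟨fun u => (M.rel_equiv a).refl u.1,
    fun h => (M.rel_equiv a).symm h, fun h h' => (M.rel_equiv a).trans h h'⟩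
  val p v := M.val p v.1

/-- Satisfaction for purely epistemic formulas (standard S5 semantics). -/
def esat (M : Model Agt) : M.W → EForm Agt → Prop
  | w, .atom p => M.val p w
  | w, .neg φ => ¬ esat M w φ
  | w, .and φ ψ => esat M w φ ∧ esat M w ψ
  | w, .know a φ => ∀ v, M.rel a w v → esat M v φ

/-- Truth of the G-announcement ⋀_{i∈G} K_i (f i) at (M,w). -/
def gsat (M : Model Agt) (w : M.W) (G : Finset Agt) (f : Agt → EForm Agt) : Prop :=
  ∀ i ∈ G, ∀ v, M.rel i w v → esat M v (f i)

variable [DecidableEq Agt] [Fintype Agt]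

/-- Satisfaction for L_CoRGAL.
[φ]ψ: if φ is true then ψ holds in the model restricted to φ-states.
[G,χ]φ: χ is true and for every G-announcement ψ_G, [ψ_G ∧ χ]φ.
[⟨G⟩]φ: for every G-announcement ψ_G there is an (A∖G)-announcement χ such
that if ψ_G is true then ⟨ψ_G ∧ χ⟩φ. -/
def sat : (M : Model Agt) → M.W → Form Agt → Prop
  | M, w, .atom p => M.val p w
  | M, w, .neg φ => ¬ sat M w φ
  | M, w, .and φ ψ => sat M w φ ∧ sat M w ψ
  | M, w, .know a φ => ∀ v, M.rel a w v → sat M v φ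
  | M, w, .ann φ ψ =>
      ∀ h : sat M w φ, sat (M.restrict fun v => sat M v φ) ⟨w, h⟩ ψ
  | M, w, .group G χ φ =>
      sat M w χ ∧ ∀ f : Agt → EForm Agt,
        ∀ h : gsat M w G f ∧ sat M w χ,
          sat (M.restrict fun v => gsat M v G f ∧ sat M v χ) ⟨w, h⟩ φ
  | M, w, .coal G φ =>
      ∀ f : Agt → EForm Agt, ∃ g : Agt → EForm Agt,
        gsat M w G f →
          ∃ h : gsat M w G f ∧ gsat M w Gᶜ g,
            sat (M.restrict fun v => gsat M v G f ∧ gsat M v Gᶜ g) ⟨w, h⟩ φ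

/-- Validity: truth at every pointed epistemic model. -/
def valid (φ : Form Agt) : Prop := ∀ (M : Model Agt) (w : M.W), sat M w φ

/-- The dual coalition operator ⟨[G]⟩φ := ¬[⟨G⟩]¬φ. -/
def coalDia (G : Finset Agt) (φ : Form Agt) : Form Agt := .neg (.coal G (.neg φ))

/-- Necessity forms η ::= ♯ | φ → η | K_a η | [φ]η. -/
inductive NForm (Agt : Type) : Type
  | hole : NForm Agt
  | imp  : Form Agt → NForm Agt → NForm Agt
  | know : Agt → NForm Agt → NForm Agt
  | ann  : Form Agt → NForm Agt → NForm Agt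

/-- η(φ): replace the placeholder ♯ by φ. -/
def NForm.subst : NForm Agt → Form Agt → Form Agt
  | .hole, φ => φ
  | .imp ψ η, φ => ψ.imp (η.subst φ)
  | .know a η, φ => .know a (η.subst φ)
  | .ann ψ η, φ => .ann ψ (η.subst φ)

/-- Instances of propositional tautologies (treating non-Boolean subformulas as atoms). -/
def Tautology (φ : Form Agt) : Prop :=
  ∀ v : Form Agt → Prop,
    (∀ ψ, v (Form.neg ψ) ↔ ¬ v ψ) →
    (∀ ψ χ, v (Form.and ψ χ) ↔ (v ψ ∧ v χ)) →
    v φ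

/-- The axiom system CoRGAL: theorems. -/
inductive Thm {Agt : Type} [DecidableEq Agt] [Fintype Agt] : Form Agt → Prop
  | taut {φ : Form Agt} : Tautology φ → Thm φ
  | a1 (a : Agt) (φ ψ : Form Agt) :
      Thm ((Form.know a (φ.imp ψ)).imp ((Form.know a φ).imp (Form.know a ψ)))
  | a2 (a : Agt) (φ : Form Agt) : Thm ((Form.know a φ).imp φ)
  | a3 (a : Agt) (φ : Form Agt) : Thm ((Form.know a φ).imp (Form.know a (Form.know a φ)))
  | a4 (a : Agt) (φ : Form Agt) :
      Thm ((Form.neg (Form.know a φ)).imp (Form.know a (Form.neg (Form.know a φ))))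
  | a5 (φ : Form Agt) (p : ℕ) : Thm ((Form.ann φ (.atom p)).iff' (φ.imp (.atom p)))
  | a6 (φ ψ : Form Agt) : Thm ((Form.ann φ (.neg ψ)).iff' (φ.imp (.neg (Form.ann φ ψ))))
  | a7 (φ ψ χ : Form Agt) :
      Thm ((Form.ann φ (.and ψ χ)).iff' ((Form.ann φ ψ).and (Form.ann φ χ)))
  | a8 (φ : Form Agt) (a : Agt) (ψ : Form Agt) :
      Thm ((Form.ann φ (.know a ψ)).iff' (φ.imp (.know a (Form.ann φ ψ))))
  | a9 (φ ψ χ : Form Agt) :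
      Thm ((Form.ann φ (.ann ψ χ)).iff' (Form.ann (φ.and (Form.ann φ ψ)) χ))
  | a10 (G : Finset Agt) (χ φ : Form Agt) (f : Agt → EForm Agt) :
      Thm ((Form.group G χ φ).imp (χ.and (Form.ann ((GAnn G f).and χ) φ)))
  | a11 (G : Finset Agt) (φ : Form Agt) (f : Agt → EForm Agt) :
      Thm ((Form.coal G φ).imp (.neg (Form.group Gᶜ (GAnn G f) (.neg φ))))
  | mp {φ ψ : Form Agt} : Thm (φ.imp ψ) → Thm φ → Thm ψ
  | necK (a : Agt) {φ : Form Agt} : Thm φ → Thm (Form.know a φ)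
  | necAnn (ψ : Form Agt) {φ : Form Agt} : Thm φ → Thm (Form.ann ψ φ)
  | necGroup (G : Finset Agt) (χ : Form Agt) {φ : Form Agt} : Thm φ → Thm (Form.group G χ φ)
  | necCoal (G : Finset Agt) {φ : Form Agt} : Thm φ → Thm (Form.coal G φ)
  | r5 {η : NForm Agt} {G : Finset Agt} {χ φ : Form Agt} :
      (∀ f : Agt → EForm Agt, Thm (η.subst (χ.and (Form.ann ((GAnn G f).and χ) φ)))) →
      Thm (η.subst (Form.group G χ φ))
  | r6 {η : NForm Agt} {G : Finset Agt} {φ : Form Agt} :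
      (∀ f : Agt → EForm Agt, Thm (η.subst (.neg (Form.group Gᶜ (GAnn G f) (.neg φ))))) →
      Thm (η.subst (Form.coal G φ))

/-- A theory: contains all theorems, closed under modus ponens (R0), R5 and R6. -/
structure IsTheory (x : Set (Form Agt)) : Prop where
  mem_of_thm : ∀ {φ : Form Agt}, Thm φ → φ ∈ x
  mp : ∀ {φ ψ : Form Agt}, φ.imp ψ ∈ x → φ ∈ x → ψ ∈ x
  r5 : ∀ (η : NForm Agt) (G : Finset Agt) (χ φ : Form Agt),
        (∀ f : Agt → EForm Agt, η.subst (χ.and (Form.ann ((GAnn G f).and χ) φ)) ∈ x) →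
        η.subst (Form.group G χ φ) ∈ x
  r6 : ∀ (η : NForm Agt) (G : Finset Agt) (φ : Form Agt),
        (∀ f : Agt → EForm Agt, η.subst (.neg (Form.group Gᶜ (GAnn G f) (.neg φ))) ∈ x) →
        η.subst (Form.coal G φ) ∈ x

def Consistent (x : Set (Form Agt)) : Prop := Form.bot ∉ x
def Maximal (x : Set (Form Agt)) : Prop := ∀ φ : Form Agt, φ ∈ x ∨ Form.neg φ ∈ x
def MCT (x : Set (Form Agt)) : Prop := IsTheory x ∧ Consistent x ∧ Maximal x

/-- The canonical model: worlds are maximal consistent theories. -/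
def canonicalModel (Agt : Type) [DecidableEq Agt] [Fintype Agt] : Model Agt where
  W := {x : Set (Form Agt) // MCT x}
  rel a x y := {φ : Form Agt | Form.know a φ ∈ x.1} = {φ : Form Agt | Form.know a φ ∈ y.1}
  rel_equiv _ := ⟨fun _ => rfl, Eq.symm, Eq.trans⟩
  val p x := Form.atom p ∈ x.1

/-- Size of a formula. -/
def fsize : Form Agt → ℕ
  | .atom _ => 1
  | .neg φ => fsize φ + 1
  | .know _ φ => fsize φ + 1
  | .group _ _ φ => fsize φ + 1
  | .coal _ φ => fsize φ + 1
  | .and φ ψ => fsize φ + fsize ψ + 1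
  | .ann ψ φ => fsize ψ + 3 * fsize φ

/-- The [,]-depth. -/
def dG : Form Agt → ℕ
  | .atom _ => 0
  | .neg φ => dG φ
  | .know _ φ => dG φ
  | .coal _ φ => dG φ
  | .and φ ψ => max (dG φ) (dG ψ)
  | .ann ψ φ => dG ψ + dG φ
  | .group _ χ φ => dG χ + dG φ + 1

/-- The [⟨⟩]-depth. -/
def dC : Form Agt → ℕ
  | .atom _ => 0
  | .neg φ => dC φ
  | .know _ φ => dC φ
  | .and φ ψ => max (dC φ) (dC ψ)
  | .ann ψ φ => dC ψ + dC φ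
  | .group _ χ φ => dC χ + dC φ
  | .coal _ φ => dC φ + 1

/-- The well-founded order <^{Size}_{[,],[⟨⟩]}. -/
def measLt (φ ψ : Form Agt) : Prop :=
  dC φ < dC ψ ∨ (dC φ = dC ψ ∧ (dG φ < dG ψ ∨ (dG φ = dG ψ ∧ fsize φ < fsize ψ)))

end CoRGAL

open CoRGAL

namespace CoRGAL

variable {Agt : Type} [DecidableEq Agt] [Fintype Agt]

lemma sat_toForm (M : Model Agt) (w : M.W) (φ : EForm Agt) :
    sat M w φ.toForm ↔ esat M w φ := by
  induction φ generalizing w with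
  | atom p => rfl
  | neg φ ih => simp [EForm.toForm, sat, esat, ih]
  | and φ ψ ih1 ih2 => simp [EForm.toForm, sat, esat, ih1, ih2]
  | know a φ ih => simp [EForm.toForm, sat, esat, ih]

lemma sat_top (M : Model Agt) (w : M.W) : sat M w Form.top := by
  simp [Form.top, Form.bot, sat]

lemma sat_foldr (M : Model Agt) (w : M.W) (l : List Agt) (g : Agt → Form Agt) :
    sat M w ((l.map g).foldr Form.and Form.top) ↔ ∀ i ∈ l, sat M w (g i) := by
  induction l with
  | nil => simpa using sat_top M w
  | cons a l ih =>
      simp only [List.map_cons, List.foldr_cons, List.mem_cons]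
      constructor
      · rintro ⟨h1, h2⟩ i (rfl | hi)
        · exact h1
        · exact (ih.mp h2) i hi
      · intro hh
        exact ⟨hh a (Or.inl rfl), ih.mpr fun i hi => hh i (Or.inr hi)⟩

lemma sat_GAnn (M : Model Agt) (w : M.W) (G : Finset Agt) (f : Agt → EForm Agt) :
    sat M w (GAnn G f) ↔ gsat M w G f := by
  unfold GAnn gsat
  rw [sat_foldr]
  constructor
  · intro hh i hi v hv
    exact (sat_toForm M v (f i)).mp (hh i (Finset.mem_toList.mpr hi) v hv)
  · intro hh i hi v hv
    exact (sat_toForm M v (f i)).mpr (hh i (Finset.mem_toList.mp hi) v hv)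

lemma sat_restrict_congr (M : Model Agt) {S T : M.W → Prop} (hST : S = T)
    {w : M.W} (hS : S w) (hT : T w) (φ : Form Agt) :
    sat (M.restrict S) ⟨w, hS⟩ φ ↔ sat (M.restrict T) ⟨w, hT⟩ φ := by
  subst hST; rfl

lemma r5_pointwise (η : NForm Agt) (G : Finset Agt) (χ φ : Form Agt) :
    ∀ (M : Model Agt) (w : M.W),
      (∀ f : Agt → EForm Agt,
        sat M w (η.subst (χ.and (Form.ann ((GAnn G f).and χ) φ)))) →
      sat M w (η.subst (Form.group G χ φ)) := by
  induction η with
  | hole =>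
      intro M w h
      simp only [NForm.subst] at h ⊢
      have hχ : sat M w χ := (h (fun _ => EForm.atom 0)).1
      refine ⟨hχ, ?_⟩
      intro f hf
      have h2 := (h f).2
      have hpre : sat M w ((GAnn G f).and χ) := ⟨(sat_GAnn M w G f).mpr hf.1, hf.2⟩
      have h3 := h2 hpre
      have heq : (fun v => sat M v ((GAnn G f).and χ)) =
          (fun v => gsat M v G f ∧ sat M v χ) := by
        funext v
        simp only [sat, sat_GAnn]
      exact (sat_restrict_congr M heq hpre hf φ).mp h3
  | imp ψ η ih =>
      intro M w h
      simp only [NForm.subst, Form.imp, sat, not_and, not_not] at h ⊢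
      intro hψ
      exact ih M w fun f => h f hψ
  | know a η ih =>
      intro M w h
      simp only [NForm.subst, sat] at h ⊢
      intro v hv
      exact ih M v fun f => h f v hv
  | ann ψ η ih =>
      intro M w h
      simp only [NForm.subst, sat] at h ⊢
      intro hψ
      exact ih _ _ fun f => h f hψ

end CoRGAL

/-- Rule R5 preserves validity: if η(χ ∧ [ψ_G ∧ χ]φ) is valid for every
G-announcement ψ_G, then η([G,χ]φ) is valid. -/
theorem statement3 (Agt : Type) [DecidableEq Agt] [Fintype Agt]
    (η : NForm Agt) (G : Finset Agt) (χ φ : Form Agt)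
    (h : ∀ f : Agt → EForm Agt, valid (η.subst (χ.and (Form.ann ((GAnn G f).and χ) φ)))) :
    valid (η.subst (Form.group G χ φ)) := by
  intro M w
  exact CoRGAL.r5_pointwise η G χ φ M w fun f => h f M w
end

section
/- For every group G ⊆ A and every formula φ of L_CoRGAL, the formula ⟨[G]⟩⟨[G]⟩φ → [⟨A∖G⟩]φ is valid: if truth of φ can be forced by two consecutive coalition announcements by G, then whatever the agents in A∖G announce, they cannot preclude G from making φ true. -/
/- Formalization of Coalition and Relativised Group Announcement Logic (CoRGAL). -/

namespace CoRGAL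

variable {Agt : Type}

variable [DecidableEq Agt] [Fintype Agt]

/-! ### Auxiliary machinery for statement7 -/

section Statement7Aux

/-- An always-true epistemic formula. -/
def eTop : EForm Agt := .neg (.and (.atom 0) (.neg (.atom 0)))

lemma esat_eTop (M : Model Agt) (w : M.W) : esat M w (eTop : EForm Agt) := by
  simp only [eTop, esat]
  tauto

lemma esat_foldr (M : Model Agt) (w : M.W) (l : List (EForm Agt)) :
    esat M w (l.foldr EForm.and eTop) ↔ ∀ ψ ∈ l, esat M w ψ := by
  induction l with
  | nil => simpa using esat_eTop M w
  | cons a l ih =>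
    simp only [List.foldr_cons, esat, ih, List.mem_cons]
    constructor
    · rintro ⟨h1, h2⟩ ψ (rfl | hψ)
      exacts [h1, h2 ψ hψ]
    · intro h
      exact ⟨h a (Or.inl rfl), fun ψ hψ => h ψ (Or.inr hψ)⟩

/-- Epistemic conjunction ⋀_{i∈H} K_i (f i). -/
noncomputable def eGAnn (H : Finset Agt) (f : Agt → EForm Agt) : EForm Agt :=
  (H.toList.map fun i => EForm.know i (f i)).foldr EForm.and eTop

lemma esat_eGAnn (M : Model Agt) (w : M.W) (H : Finset Agt) (f : Agt → EForm Agt) :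
    esat M w (eGAnn H f) ↔ gsat M w H f := by
  unfold eGAnn gsat
  rw [esat_foldr]
  constructor
  · intro h i hi v hv
    exact h (EForm.know i (f i)) (List.mem_map.mpr ⟨i, Finset.mem_toList.mpr hi, rfl⟩) v hv
  · intro h ψ hψ
    obtain ⟨i, hi, rfl⟩ := List.mem_map.mp hψ
    exact h i (Finset.mem_toList.mp hi)

def eImp (α β : EForm Agt) : EForm Agt := .neg (.and α (.neg β))

lemma esat_eImp (M : Model Agt) (w : M.W) (α β : EForm Agt) :
    esat M w (eImp α β) ↔ (esat M w α → esat M w β) := by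
  simp only [eImp, esat]; tauto

/-- Relativization of an epistemic formula by the announcement α. -/
def relE (α : EForm Agt) : EForm Agt → EForm Agt
  | .atom p => .atom p
  | .neg ψ => .neg (relE α ψ)
  | .and ψ χ => .and (relE α ψ) (relE α χ)
  | .know a ψ => .know a (eImp α (relE α ψ))

lemma relE_correct (M : Model Agt) (S : M.W → Prop) (α : EForm Agt)
    (hS : ∀ v, S v ↔ esat M v α) :
    ∀ (ψ : EForm Agt) (v : M.W) (hv : S v),
      esat (M.restrict S) ⟨v, hv⟩ ψ ↔ esat M v (relE α ψ) := by
  intro ψ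
  induction ψ with
  | atom p => intro v hv; exact Iff.rfl
  | neg ψ ih => intro v hv; simp only [relE, esat, ih v hv]
  | and ψ χ ih1 ih2 => intro v hv; simp only [relE, esat, ih1 v hv, ih2 v hv]
  | know a ψ ih =>
    intro v hv
    simp only [relE, eImp, esat]
    constructor
    · rintro h u hu ⟨hα, hn⟩
      exact hn ((ih u ((hS u).mpr hα)).mp (h ⟨u, (hS u).mpr hα⟩ hu))
    · intro h u hu
      refine (ih u.1 u.2).mpr ?_
      by_contra hb
      exact h u.1 hu ⟨(hS u.1).mp u.2, hb⟩

lemma esat_iso (ψ : EForm Agt) : ∀ (M N : Model Agt) (e : M.W ≃ N.W),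
    (∀ a u v, M.rel a u v ↔ N.rel a (e u) (e v)) →
    (∀ p v, M.val p v ↔ N.val p (e v)) →
    ∀ v, esat M v ψ ↔ esat N (e v) ψ := by
  induction ψ with
  | atom p => intro M N e hr hv v; exact hv p v
  | neg ψ ih => intro M N e hr hv v; simp only [esat, ih M N e hr hv v]
  | and ψ χ ih1 ih2 =>
    intro M N e hr hv v; simp only [esat, ih1 M N e hr hv v, ih2 M N e hr hv v]
  | know a ψ ih =>
    intro M N e hr hv v
    simp only [esat]
    constructor
    · intro h u hu
      have h1 := h (e.symm u) ((hr a v (e.symm u)).mpr (by simpa using hu))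
      have h2 := (ih M N e hr hv (e.symm u)).mp h1
      simpa using h2
    · intro h u hu
      exact (ih M N e hr hv u).mpr (h (e u) ((hr a v u).mp hu))

lemma gsat_iso (M N : Model Agt) (e : M.W ≃ N.W)
    (hr : ∀ a u v, M.rel a u v ↔ N.rel a (e u) (e v))
    (hv : ∀ p v, M.val p v ↔ N.val p (e v))
    (H : Finset Agt) (f : Agt → EForm Agt) (v : M.W) :
    gsat M v H f ↔ gsat N (e v) H f := by
  unfold gsat
  constructor
  · intro h i hi u hu
    have h1 := h i hi (e.symm u) ((hr i v (e.symm u)).mpr (by simpa using hu))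
    have h2 := (esat_iso (f i) M N e hr hv (e.symm u)).mp h1
    simpa using h2
  · intro h i hi u hu
    exact (esat_iso (f i) M N e hr hv u).mpr (h i hi (e u) ((hr i v u).mp hu))

lemma sat_restrict_iso_aux {ψ : Form Agt}
    (ihψ : ∀ (M N : Model Agt) (e : M.W ≃ N.W),
      (∀ a u v, M.rel a u v ↔ N.rel a (e u) (e v)) →
      (∀ p v, M.val p v ↔ N.val p (e v)) →
      ∀ v, sat M v ψ ↔ sat N (e v) ψ)
    (M N : Model Agt) (e : M.W ≃ N.W)
    (hr : ∀ a u v, M.rel a u v ↔ N.rel a (e u) (e v))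
    (hv : ∀ p v, M.val p v ↔ N.val p (e v))
    (S : M.W → Prop) (T : N.W → Prop) (hST : ∀ u, S u ↔ T (e u))
    (v : M.W) (h1 : S v) (h2 : T (e v)) :
    sat (M.restrict S) ⟨v, h1⟩ ψ ↔ sat (N.restrict T) ⟨e v, h2⟩ ψ := by
  have key := ihψ (M.restrict S) (N.restrict T) (e.subtypeEquiv hST)
      (fun a u w => hr a u.1 w.1) (fun p u => hv p u.1) ⟨v, h1⟩
  exact key

lemma sat_iso : ∀ (φ : Form Agt) (M N : Model Agt) (e : M.W ≃ N.W),
    (∀ a u v, M.rel a u v ↔ N.rel a (e u) (e v)) →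
    (∀ p v, M.val p v ↔ N.val p (e v)) →
    ∀ v, sat M v φ ↔ sat N (e v) φ := by
  intro φ
  induction φ with
  | atom p => intro M N e hr hv v; exact hv p v
  | neg φ ih => intro M N e hr hv v; simp only [sat, ih M N e hr hv v]
  | and φ ψ ih1 ih2 =>
    intro M N e hr hv v; simp only [sat, ih1 M N e hr hv v, ih2 M N e hr hv v]
  | know a φ ih =>
    intro M N e hr hv v
    simp only [sat]
    constructor
    · intro h u hu
      have h1 := h (e.symm u) ((hr a v (e.symm u)).mpr (by simpa using hu))
      have h2 := (ih M N e hr hv (e.symm u)).mp h1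
      simpa using h2
    · intro h u hu
      exact (ih M N e hr hv u).mpr (h (e u) ((hr a v u).mp hu))
  | ann φ ψ ih1 ih2 =>
    intro M N e hr hv v
    simp only [sat]
    have hpt := ih1 M N e hr hv
    constructor
    · intro h hN
      exact (sat_restrict_iso_aux ih2 M N e hr hv _ _ hpt v ((hpt v).mpr hN) hN).mp
        (h ((hpt v).mpr hN))
    · intro h hM
      exact (sat_restrict_iso_aux ih2 M N e hr hv _ _ hpt v hM ((hpt v).mp hM)).mpr
        (h ((hpt v).mp hM))
  | group H χ φ ih1 ih2 =>
    intro M N e hr hv v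
    simp only [sat]
    have hχ := ih1 M N e hr hv
    constructor
    · rintro ⟨h1, h2⟩
      refine ⟨(hχ v).mp h1, fun f hh => ?_⟩
      have hM : gsat M v H f ∧ sat M v χ :=
        ⟨(gsat_iso M N e hr hv H f v).mpr hh.1, (hχ v).mpr hh.2⟩
      exact (sat_restrict_iso_aux ih2 M N e hr hv _ _
        (fun u => and_congr (gsat_iso M N e hr hv H f u) (hχ u)) v hM hh).mp (h2 f hM)
    · rintro ⟨h1, h2⟩
      refine ⟨(hχ v).mpr h1, fun f hh => ?_⟩
      have hN : gsat N (e v) H f ∧ sat N (e v) χ :=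
        ⟨(gsat_iso M N e hr hv H f v).mp hh.1, (hχ v).mp hh.2⟩
      exact (sat_restrict_iso_aux ih2 M N e hr hv _ _
        (fun u => and_congr (gsat_iso M N e hr hv H f u) (hχ u)) v hh hN).mpr (h2 f hN)
  | coal H φ ih =>
    intro M N e hr hv v
    simp only [sat]
    constructor
    · intro h f
      obtain ⟨g, hgg⟩ := h f
      refine ⟨g, fun hN => ?_⟩
      obtain ⟨hh, hs⟩ := hgg ((gsat_iso M N e hr hv H f v).mpr hN)
      have hN2 : gsat N (e v) H f ∧ gsat N (e v) Hᶜ g :=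
        ⟨(gsat_iso M N e hr hv H f v).mp hh.1, (gsat_iso M N e hr hv Hᶜ g v).mp hh.2⟩
      exact ⟨hN2, (sat_restrict_iso_aux ih M N e hr hv _ _
        (fun u => and_congr (gsat_iso M N e hr hv H f u) (gsat_iso M N e hr hv Hᶜ g u))
        v hh hN2).mp hs⟩
    · intro h f
      obtain ⟨g, hgg⟩ := h f
      refine ⟨g, fun hM => ?_⟩
      obtain ⟨hh, hs⟩ := hgg ((gsat_iso M N e hr hv H f v).mp hM)
      have hM2 : gsat M v H f ∧ gsat M v Hᶜ g :=
        ⟨(gsat_iso M N e hr hv H f v).mpr hh.1, (gsat_iso M N e hr hv Hᶜ g v).mpr hh.2⟩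
      exact ⟨hM2, (sat_restrict_iso_aux ih M N e hr hv _ _
        (fun u => and_congr (gsat_iso M N e hr hv H f u) (gsat_iso M N e hr hv Hᶜ g u))
        v hM2 hh).mpr hs⟩

/-- Collapsing a double restriction into a single restriction. -/
def drEquiv (M : Model Agt) (S : M.W → Prop) (T : (M.restrict S).W → Prop) :
    ((M.restrict S).restrict T).W ≃ (M.restrict fun v => ∃ h : S v, T ⟨v, h⟩).W where
  toFun u := ⟨u.1.1, u.1.2, u.2⟩
  invFun v := ⟨⟨v.1, v.2.choose⟩, v.2.choose_spec⟩
  left_inv u := Subtype.ext (Subtype.ext rfl)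
  right_inv v := Subtype.ext rfl

end Statement7Aux
section Statement7Key

/-- The combined response announcement of `G`. -/
noncomputable def gComb (G : Finset Agt) (f₁ f f₂ : Agt → EForm Agt) : Agt → EForm Agt :=
  fun i => EForm.and (f₁ i)
    (eImp (.and (eGAnn G f₁) (eGAnn Gᶜ f)) (relE (.and (eGAnn G f₁) (eGAnn Gᶜ f)) (f₂ i)))

lemma key_combine (M : Model Agt) (G : Finset Agt) (f₁ f f₂ : Agt → EForm Agt) (v : M.W) :
    (gsat M v Gᶜ f ∧ gsat M v Gᶜᶜ (gComb G f₁ f f₂)) ↔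
    (∃ h : gsat M v G f₁ ∧ gsat M v Gᶜ f,
       gsat (M.restrict fun u => gsat M u G f₁ ∧ gsat M u Gᶜ f) ⟨v, h⟩ G f₂) := by
  have hSα : ∀ u : M.W, (gsat M u G f₁ ∧ gsat M u Gᶜ f) ↔
      esat M u (EForm.and (eGAnn G f₁) (eGAnn Gᶜ f)) := by
    intro u
    simp only [esat, esat_eGAnn]
  rw [compl_compl]
  constructor
  · rintro ⟨hf, hg⟩
    have hgf₁ : gsat M v G f₁ := fun i hi u hu => (hg i hi u hu).1
    refine ⟨⟨hgf₁, hf⟩, ?_⟩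
    intro i hi u hu
    have h2 := (esat_eImp M u.1 _ _).mp (hg i hi u.1 hu).2
    exact (relE_correct M _ _ hSα (f₂ i) u.1 u.2).mpr (h2 ((hSα u.1).mp u.2))
  · rintro ⟨h, hT⟩
    refine ⟨h.2, ?_⟩
    intro i hi u hu
    refine ⟨h.1 i hi u hu, (esat_eImp M u _ _).mpr fun hαu => ?_⟩
    have hSu : gsat M u G f₁ ∧ gsat M u Gᶜ f := (hSα u).mpr hαu
    exact (relE_correct M _ _ hSα (f₂ i) u hSu).mp (hT i hi ⟨u, hSu⟩ hu)

end Statement7Key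
end CoRGAL

open CoRGAL

/-- ⟨[G]⟩⟨[G]⟩φ → [⟨A∖G⟩]φ is valid. -/
theorem statement7 (Agt : Type) [DecidableEq Agt] [Fintype Agt]
    (G : Finset Agt) (φ : Form Agt) :
    valid ((coalDia G (coalDia G φ)).imp (Form.coal Gᶜ φ)) := by
  classical
  intro M w
  have himp : ∀ (a b : Form Agt), (sat M w a → sat M w b) → sat M w (a.imp b) := by
    intro a b h
    simp only [Form.imp, sat]
    tauto
  apply himp
  intro Hyp
  have H1 : ∃ f₁ : Agt → EForm Agt, ∀ g : Agt → EForm Agt,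
      gsat M w G f₁ ∧ ∀ h : gsat M w G f₁ ∧ gsat M w Gᶜ g,
        sat (M.restrict fun v => gsat M v G f₁ ∧ gsat M v Gᶜ g) ⟨w, h⟩ (coalDia G φ) := by
    by_contra hc
    push_neg at hc
    exact Hyp hc
  obtain ⟨f₁, H1⟩ := H1
  show ∀ f : Agt → EForm Agt, ∃ g : Agt → EForm Agt,
      gsat M w Gᶜ f → ∃ h : gsat M w Gᶜ f ∧ gsat M w Gᶜᶜ g,
        sat (M.restrict fun v => gsat M v Gᶜ f ∧ gsat M v Gᶜᶜ g) ⟨w, h⟩ φ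
  intro f
  by_cases h0 : gsat M w Gᶜ f
  swap
  · exact ⟨fun _ => eTop, fun hg => absurd hg h0⟩
  obtain ⟨hf₁, H2⟩ := H1 f
  have HD := H2 ⟨hf₁, h0⟩
  have H3 : ∃ f₂ : Agt → EForm Agt, ∀ g₂ : Agt → EForm Agt,
      gsat (M.restrict fun v => gsat M v G f₁ ∧ gsat M v Gᶜ f) ⟨w, ⟨hf₁, h0⟩⟩ G f₂ ∧
      ∀ h : gsat (M.restrict fun v => gsat M v G f₁ ∧ gsat M v Gᶜ f) ⟨w, ⟨hf₁, h0⟩⟩ G f₂ ∧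
            gsat (M.restrict fun v => gsat M v G f₁ ∧ gsat M v Gᶜ f) ⟨w, ⟨hf₁, h0⟩⟩ Gᶜ g₂,
        sat ((M.restrict fun v => gsat M v G f₁ ∧ gsat M v Gᶜ f).restrict
              fun u => gsat (M.restrict fun v => gsat M v G f₁ ∧ gsat M v Gᶜ f) u G f₂ ∧
                       gsat (M.restrict fun v => gsat M v G f₁ ∧ gsat M v Gᶜ f) u Gᶜ g₂)
            ⟨⟨w, ⟨hf₁, h0⟩⟩, h⟩ φ := by
    by_contra hc
    push_neg at hc
    exact HD hc
  obtain ⟨f₂, H3⟩ := H3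
  obtain ⟨hf₂, H4⟩ := H3 (fun _ => eTop)
  have hgT : ∀ u : (M.restrict fun v => gsat M v G f₁ ∧ gsat M v Gᶜ f).W,
      gsat (M.restrict fun v => gsat M v G f₁ ∧ gsat M v Gᶜ f) u Gᶜ
        (fun _ => (eTop : EForm Agt)) := by
    intro u i _ x _
    exact esat_eTop _ _
  have HQ := H4 ⟨hf₂, hgT _⟩
  refine ⟨gComb G f₁ f f₂, fun _ => ?_⟩
  have hC : gsat M w Gᶜ f ∧ gsat M w Gᶜᶜ (gComb G f₁ f f₂) :=
    (key_combine M G f₁ f f₂ w).mpr ⟨⟨hf₁, h0⟩, hf₂⟩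
  refine ⟨hC, ?_⟩
  have hEq : ∀ v : M.W,
      (∃ h : gsat M v G f₁ ∧ gsat M v Gᶜ f,
        gsat (M.restrict fun u => gsat M u G f₁ ∧ gsat M u Gᶜ f) ⟨v, h⟩ G f₂ ∧
        gsat (M.restrict fun u => gsat M u G f₁ ∧ gsat M u Gᶜ f) ⟨v, h⟩ Gᶜ
          (fun _ => (eTop : EForm Agt))) ↔
      (gsat M v Gᶜ f ∧ gsat M v Gᶜᶜ (gComb G f₁ f f₂)) := by
    intro v
    rw [key_combine M G f₁ f f₂ v]
    constructor
    · rintro ⟨h, h1, _⟩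
      exact ⟨h, h1⟩
    · rintro ⟨h, h1⟩
      exact ⟨h, h1, hgT _⟩
  exact (sat_iso φ _
      (M.restrict fun v => gsat M v Gᶜ f ∧ gsat M v Gᶜᶜ (gComb G f₁ f f₂))
      ((drEquiv M (fun v => gsat M v G f₁ ∧ gsat M v Gᶜ f)
        (fun u => gsat (M.restrict fun v => gsat M v G f₁ ∧ gsat M v Gᶜ f) u G f₂ ∧
                  gsat (M.restrict fun v => gsat M v G f₁ ∧ gsat M v Gᶜ f) u Gᶜ
                    (fun _ => (eTop : EForm Agt)))).trans
        (Equiv.subtypeEquivRight hEq))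
      (fun a u u' => Iff.rfl) (fun p u => Iff.rfl)
      ⟨⟨w, ⟨hf₁, h0⟩⟩, ⟨hf₂, hgT _⟩⟩).mp HQ
end

section
/- If x is a theory and φ ∈ L_CoRGAL, then [φ]x := {ψ : [φ]ψ ∈ x} is a theory. -/
/- Formalization of Coalition and Relativised Group Announcement Logic (CoRGAL). -/

namespace CoRGAL

variable {Agt : Type}

variable [DecidableEq Agt] [Fintype Agt]

section Aux

variable {Agt : Type} [DecidableEq Agt] [Fintype Agt]

lemma dC_toForm (e : EForm Agt) : dC e.toForm = 0 := by
  induction e <;> simp [EForm.toForm, dC, *]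

lemma dG_toForm (e : EForm Agt) : dG e.toForm = 0 := by
  induction e <;> simp [EForm.toForm, dG, *]

lemma dC_GAnn (G : Finset Agt) (f : Agt → EForm Agt) : dC (GAnn G f) = 0 := by
  unfold GAnn
  induction G.toList with
  | nil => simp [dC, Form.top, Form.bot]
  | cons a l ih => simp [dC, dC_toForm, ih]

lemma dG_GAnn (G : Finset Agt) (f : Agt → EForm Agt) : dG (GAnn G f) = 0 := by
  unfold GAnn
  induction G.toList with
  | nil => simp [dG, Form.top, Form.bot]
  | cons a l ih => simp [dG, dG_toForm, ih]

lemma fsize_pos (φ : Form Agt) : 0 < fsize φ := by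
  induction φ <;> simp [fsize] <;> omega

lemma mp1 {A B : Form Agt} (t : Tautology (A.imp B)) (hA : Thm A) : Thm B :=
  Thm.mp (Thm.taut t) hA

lemma mp2 {A B C : Form Agt} (t : Tautology (A.imp (B.imp C)))
    (hA : Thm A) (hB : Thm B) : Thm C :=
  Thm.mp (mp1 t hA) hB

lemma mp3 {A B C D : Form Agt} (t : Tautology (A.imp (B.imp (C.imp D))))
    (hA : Thm A) (hB : Thm B) (hC : Thm C) : Thm D :=
  Thm.mp (mp2 t hA hB) hC

lemma mp4 {A B C D E : Form Agt} (t : Tautology (A.imp (B.imp (C.imp (D.imp E)))))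
    (hA : Thm A) (hB : Thm B) (hC : Thm C) (hD : Thm D) : Thm E :=
  Thm.mp (mp3 t hA hB hC) hD

/-- Key lemma: ⊢ ¬φ → [φ]χ, by well-founded induction on the measure (dC, dG, fsize). -/
theorem negAnn : ∀ (χ φ : Form Agt), Thm ((Form.neg φ).imp (Form.ann φ χ))
  | .atom p, φ =>
      mp1 (by intro v hneg hand; simp only [Form.iff', Form.imp, hneg, hand]; tauto)
        (Thm.a5 φ p)
  | .neg ψ, φ =>
      mp1 (by intro v hneg hand; simp only [Form.iff', Form.imp, hneg, hand]; tauto)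
        (Thm.a6 φ ψ)
  | .and ψ χ, φ =>
      mp3 (by intro v hneg hand; simp only [Form.iff', Form.imp, hneg, hand]; tauto)
        (Thm.a7 φ ψ χ) (negAnn ψ φ) (negAnn χ φ)
  | .know a ψ, φ =>
      mp1 (by intro v hneg hand; simp only [Form.iff', Form.imp, hneg, hand]; tauto)
        (Thm.a8 φ a ψ)
  | .ann ψ χ, φ =>
      mp2 (by intro v hneg hand; simp only [Form.iff', Form.imp, hneg, hand]; tauto)
        (Thm.a9 φ ψ χ) (negAnn χ (φ.and (Form.ann φ ψ)))
  | .group G χ ψ, φ =>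
      Thm.r5 (η := NForm.imp (Form.neg φ) (NForm.ann φ NForm.hole))
        (fun f => negAnn (χ.and (Form.ann ((GAnn G f).and χ) ψ)) φ)
  | .coal G ψ, φ =>
      Thm.r6 (η := NForm.imp (Form.neg φ) (NForm.ann φ NForm.hole))
        (fun f => negAnn (.neg (Form.group Gᶜ (GAnn G f) (.neg ψ))) φ)
  termination_by χ _ => (dC χ, dG χ, fsize χ)
  decreasing_by
    all_goals simp only [Prod.lex_def, dC, dG, fsize, dC_GAnn, dG_GAnn]
    all_goals try omega
    · have h1 := fsize_pos ψ; have h2 := fsize_pos χ; omega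

/-- The K axiom for public announcement is derivable. -/
lemma annK (φ ψ χ : Form Agt) :
    Thm ((Form.ann φ (ψ.imp χ)).imp ((Form.ann φ ψ).imp (Form.ann φ χ))) :=
  mp4 (by intro v hneg hand; simp only [Form.iff', Form.imp, hneg, hand]; tauto)
    (Thm.a6 φ (ψ.and (.neg χ))) (Thm.a7 φ ψ (.neg χ)) (Thm.a6 φ χ) (negAnn χ φ)

end Aux

end CoRGAL

open CoRGAL

/-- if x is a theory then [φ]x = {ψ : [φ]ψ ∈ x} is a theory. -/
theorem statement14 (Agt : Type) [DecidableEq Agt] [Fintype Agt]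
    (x : Set (Form Agt)) (hx : IsTheory x) (φ : Form Agt) :
    IsTheory {ψ : Form Agt | Form.ann φ ψ ∈ x} := by
  refine ⟨?_, ?_, ?_, ?_⟩
  · intro ψ h
    exact hx.mem_of_thm (Thm.necAnn φ h)
  · intro ψ χ h1 h2
    exact hx.mp (hx.mp (hx.mem_of_thm (annK φ ψ χ)) h1) h2
  · intro η G χ ψ h
    exact hx.r5 (NForm.ann φ η) G χ ψ h
  · intro η G ψ h
    exact hx.r6 (NForm.ann φ η) G ψ h
end
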